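/- Assume in addition that v_1,…,v_n are pairwise distinct, and let w_{n+1} ∈ ℂ be distinct from all v_i and all u_k. Set (w_1,…,w_n) := (v_1,…,v_n) and define the (n+1)×(n+1) matrix W by W_{jℓ} := g(u_ℓ,w_j) · (∏_{i≠ℓ} g(u_ℓ,u_i)) / (∏_{m=1}^{n+1} g(u_ℓ,w_m)). Then the last row of W·M vanishes, i.e. (W·M)_{(n+1)k} = 0 for all k = 1, …, n+1, and for every j = 1, …, n and k = 1, …, n+1 one has (W·M)_{jk} = (∏_{i≠k} g(u_k,u_i)) · Ω_{jk} / g(w_{n+1},v_j). -/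

import Mathlib

/-!
For `c ≠ 0` the entries of `W` are `W_{jℓ} = ∏_{m≠j} (u_ℓ - w_m) / ∏_{i≠ℓ} (u_ℓ - u_i)`, the
Lagrange weights at the nodes `u` of the polynomial `∏_{m≠j} (X - w_m)` of degree `n`. Comparing
coefficients of its Lagrange interpolant gives `∑_ℓ W_{jℓ} σ_p(û_ℓ) = σ_p(ŵ_j)`, so
`(W M)_{jk} = P_k Y_k(ŵ_j) - W_{jk} Q_k Y_k(v)` with `P_k = ∏_{i≠k} g(u_k,u_i)` and
`Q_k = ∏_i g(u_k,v_i)`. In the last row `ŵ = v` and `W_{n+1,k} Q_k = P_k`. In row `j ≤ n`, `ŵ_j` is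
`v` with `v_j` replaced by `w_{n+1}`, and the claim becomes a three-point identity for
`t ↦ Y_k(v^{(j→t)})`, which is affine in `t`.
-/

/-- `g c x y = c / (x - y)`. -/
noncomputable def g (c x y : ℂ) : ℂ := c / (x - y)

/-- `esym w p` is the `p`-th elementary symmetric polynomial of the entries of `w`;
it equals `1` for `p = 0` and `0` for `p` larger than the number of entries. -/
noncomputable def esym {m : ℕ} (w : Fin m → ℂ) (p : ℕ) : ℂ :=
  ∑ s ∈ Finset.powersetCard p Finset.univ, ∏ i ∈ s, w i

/-- `Y a w = ∑_{p=0}^{n} a p * σ_p(w)`. -/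
noncomputable def Y {n : ℕ} (a : Fin (n + 1) → ℂ) (w : Fin n → ℂ) : ℂ :=
  ∑ p : Fin (n + 1), a p * esym w (p : ℕ)

/-- The matrix `M_{jk} = (∏_{i≠k} g(u_k,u_i)) Y_k(û_j) - δ_{jk} (∏_i g(u_j,v_i)) Y_j(v)`. -/
noncomputable def Mmat (c : ℂ) {n : ℕ} (u : Fin (n + 1) → ℂ) (v : Fin n → ℂ)
    (a : Fin (n + 1) → Fin (n + 1) → ℂ) : Matrix (Fin (n + 1)) (Fin (n + 1)) ℂ :=
  Matrix.of fun j k =>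
    (∏ i ∈ Finset.univ.erase k, g c (u k) (u i)) * Y (fun p => a p k) (u ∘ j.succAbove)
      - (if j = k then 1 else 0) * ((∏ i, g c (u j) (v i)) * Y (fun p => a p j) v)

/-- The `n × (n+1)` matrix `Ω_{jk} = g(u_k, v_j) * Y_k(v^{(j → u_k)})`. -/
noncomputable def Om (c : ℂ) {n : ℕ} (u : Fin (n + 1) → ℂ) (v : Fin n → ℂ)
    (a : Fin (n + 1) → Fin (n + 1) → ℂ) : Matrix (Fin n) (Fin (n + 1)) ℂ :=
  Matrix.of fun j k =>
    g c (u k) (v j) * Y (fun p => a p k) (Function.update v j (u k))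

/-- `Ω̂_ℓ` : the determinant of the `n × n` matrix obtained from `Ω` by deleting column `ℓ`. -/
noncomputable def OmHat (c : ℂ) {n : ℕ} (u : Fin (n + 1) → ℂ) (v : Fin n → ℂ)
    (a : Fin (n + 1) → Fin (n + 1) → ℂ) (ℓ : Fin (n + 1)) : ℂ :=
  ((Om c u v a).submatrix id ℓ.succAbove).det

/-- `Δ(û_ℓ) = ∏_{j > k, j ≠ ℓ, k ≠ ℓ} g(u_j, u_k)`. -/
noncomputable def DelHat (c : ℂ) {n : ℕ} (u : Fin (n + 1) → ℂ) (ℓ : Fin (n + 1)) : ℂ :=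
  ∏ p ∈ Finset.univ.filter
      (fun p : Fin (n + 1) × Fin (n + 1) => p.2 < p.1 ∧ p.1 ≠ ℓ ∧ p.2 ≠ ℓ),
    g c (u p.1) (u p.2)

open Finset Polynomial

theorem Multiset.coeff_prod_X_sub_C_card_sub {R : Type*} [CommRing R] (z : Multiset R) {p : ℕ}
    (hp : p ≤ card z) :
    (z.map fun t => X - C t).prod.coeff (card z - p) = (-1) ^ p * z.esymm p := by
  rw [prod_X_sub_C_coeff z (Nat.sub_le _ _), Nat.sub_sub_self hp]

theorem Lagrange.basis_eq_C_mul_prod {F ι : Type*} [Field F] [DecidableEq ι] (s : Finset ι)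
    (u : ι → F) (ℓ : ι) :
    Lagrange.basis s u ℓ = C (∏ i ∈ s.erase ℓ, (u ℓ - u i))⁻¹ *
      (((s.erase ℓ).val.map u).map fun t => X - C t).prod := by
  rw [Multiset.map_map, Function.comp_def, prod_map_val, ← prod_inv_distrib, map_prod,
    ← prod_mul_distrib]
  rfl

theorem Lagrange.sum_div_mul_esymm_erase {F ι : Type*} [Field F] [DecidableEq ι] {s : Finset ι}
    {u : ι → F} (hu : Set.InjOn u s) (z : Multiset F) (hz : Multiset.card z + 1 = #s) {p : ℕ}
    (hp : p ≤ Multiset.card z) :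
    ∑ ℓ ∈ s, (z.map (u ℓ - ·)).prod / (∏ i ∈ s.erase ℓ, (u ℓ - u i)) *
      ((s.erase ℓ).val.map u).esymm p = z.esymm p := by
  set f : F[X] := (z.map fun t => X - C t).prod
  have hdeg : f.degree < #s := by
    refine degree_le_natDegree.trans_lt ?_
    rw [natDegree_multiset_prod_X_sub_C_eq_card, ← hz]
    exact_mod_cast Nat.lt_succ_self _
  have hbasis : ∀ ℓ ∈ s, (((s.erase ℓ).val.map u).map fun t => X - C t).prod.coeff
      (Multiset.card z - p) = (-1) ^ p * ((s.erase ℓ).val.map u).esymm p := by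
    intro ℓ hℓ
    have hcard : Multiset.card ((s.erase ℓ).val.map u) = Multiset.card z := by
      rw [Multiset.card_map, card_val, card_erase_of_mem hℓ, ← hz, Nat.add_sub_cancel]
    rw [← hcard]
    exact Multiset.coeff_prod_X_sub_C_card_sub _ (hcard ▸ hp)
  have heval : ∀ x, f.eval x = (z.map (x - ·)).prod := by
    simp [f, eval_multiset_prod]
  have hcoeff := congrArg (coeff · (Multiset.card z - p)) (eq_interpolate hu hdeg)
  simp only [Lagrange.interpolate_apply, finsetSum_coeff, coeff_C_mul,
    Lagrange.basis_eq_C_mul_prod] at hcoeff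
  rw [sum_congr rfl fun ℓ hℓ => by rw [hbasis ℓ hℓ, heval],
    Multiset.coeff_prod_X_sub_C_card_sub z hp] at hcoeff
  apply mul_left_cancel₀ (pow_ne_zero p (neg_ne_zero.2 one_ne_zero) : (-1 : F) ^ p ≠ 0)
  rw [hcoeff, mul_sum]
  exact sum_congr rfl fun ℓ _ => by ring

theorem Multiset.esymm_cons_succ {R : Type*} [CommSemiring R] (a : R) (s : Multiset R) (p : ℕ) :
    (a ::ₘ s).esymm (p + 1) = s.esymm (p + 1) + a * s.esymm p := by
  simp [Multiset.esymm, powersetCard_cons, Multiset.map_map, Multiset.sum_map_mul_left]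

theorem Multiset.sub_mul_esymm_cons {R : Type*} [CommRing R] (s : Multiset R) (x y z : R)
    (p : ℕ) :
    (x - z) * (y ::ₘ s).esymm p = (x - y) * (z ::ₘ s).esymm p + (y - z) * (x ::ₘ s).esymm p := by
  cases p with
  | zero =>
    simp only [Multiset.esymm, powersetCard_zero_left, map_singleton, prod_zero, sum_singleton]
    ring
  | succ p => simp only [esymm_cons_succ]; ring

theorem Finset.map_univ_val_eq_cons_erase {α β : Type*} [Fintype α] [DecidableEq α] (f : α → β)
    (i : α) : univ.val.map f = f i ::ₘ (univ.erase i).val.map f := by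
  rw [erase_val, ← Multiset.map_cons, Multiset.cons_erase (mem_univ_val i)]

theorem Fin.map_univ_val_eq_cons_succAbove {α : Type*} {n : ℕ} (f : Fin (n + 1) → α)
    (i : Fin (n + 1)) : univ.val.map f = f i ::ₘ univ.val.map (f ∘ i.succAbove) := by
  rw [univ_succAbove n i, cons_val, Multiset.map_cons, map_val, Multiset.map_map, coe_succAboveEmb]

theorem Fin.map_univ_val_comp_succAbove {α : Type*} {n : ℕ} (f : Fin (n + 1) → α)
    (i : Fin (n + 1)) : univ.val.map (f ∘ i.succAbove) = (univ.erase i).val.map f := by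
  rw [← Multiset.cons_inj_right (f i), ← map_univ_val_eq_cons_succAbove,
    ← map_univ_val_eq_cons_erase]

theorem Finset.map_univ_val_update {α β : Type*} [Fintype α] [DecidableEq α] (v : α → β) (j : α)
    (t : β) : univ.val.map (Function.update v j t) = t ::ₘ (univ.erase j).val.map v := by
  rw [map_univ_val_eq_cons_erase _ j, Function.update_self]
  congr 1
  exact Multiset.map_congr rfl fun i hi =>
    Function.update_of_ne (ne_of_mem_erase (mem_def.2 hi)) _ _

theorem Fin.map_univ_val_snoc_comp_succAbove_castSucc {α : Type*} {n : ℕ} (v : Fin n → α)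
    (t : α) (j : Fin n) :
    univ.val.map (Fin.snoc v t ∘ j.castSucc.succAbove : Fin n → α) =
      univ.val.map (Function.update v j t) := by
  rw [← Multiset.cons_inj_right (v j), map_univ_val_update, Multiset.cons_swap,
    ← map_univ_val_eq_cons_erase]
  have h := map_univ_val_eq_cons_succAbove (Fin.snoc v t : Fin (n + 1) → α) j.castSucc
  rw [map_univ_val_eq_cons_succAbove _ (last n), snoc_castSucc, snoc_last, succAbove_last,
    snoc_comp_castSucc] at h
  exact h.symm

theorem Y_eq_sum_esymm {n : ℕ} (b : Fin (n + 1) → ℂ) (w : Fin n → ℂ) :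
    Y b w = ∑ p : Fin (n + 1), b p * (univ.val.map w).esymm p := by
  simp only [Y, esym, esymm_map_val]

theorem Y_congr {n : ℕ} (b : Fin (n + 1) → ℂ) {w₁ w₂ : Fin n → ℂ}
    (h : univ.val.map w₁ = univ.val.map w₂) : Y b w₁ = Y b w₂ := by
  rw [Y_eq_sum_esymm, Y_eq_sum_esymm, h]

theorem sub_mul_Y_update {n : ℕ} (b : Fin (n + 1) → ℂ) (v : Fin n → ℂ) (j : Fin n) (x y : ℂ) :
    (x - v j) * Y b (Function.update v j y) =
      (x - y) * Y b v + (y - v j) * Y b (Function.update v j x) := by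
  simp only [Y_eq_sum_esymm, map_univ_val_update, mul_sum, ← sum_add_distrib]
  rw [map_univ_val_eq_cons_erase v j]
  exact sum_congr rfl fun p _ => by
    linear_combination b p * Multiset.sub_mul_esymm_cons _ x y (v j) p

theorem g_ne_zero {c x y : ℂ} (hc : c ≠ 0) (h : x ≠ y) : g c x y ≠ 0 :=
  div_ne_zero hc (sub_ne_zero.2 h)

theorem prod_g {ι : Type*} (c x : ℂ) (s : Finset ι) (y : ι → ℂ) :
    ∏ i ∈ s, g c x (y i) = c ^ #s / ∏ i ∈ s, (x - y i) := by
  simp only [g, prod_div_distrib, prod_const]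

noncomputable def Wmat (c : ℂ) {n : ℕ} (u w : Fin (n + 1) → ℂ) :
    Matrix (Fin (n + 1)) (Fin (n + 1)) ℂ :=
  Matrix.of fun j ℓ =>
    g c (u ℓ) (w j) * (∏ i ∈ univ.erase ℓ, g c (u ℓ) (u i)) / (∏ m, g c (u ℓ) (w m))

section Wmat

variable {c : ℂ} {n : ℕ} {u w : Fin (n + 1) → ℂ}

theorem Wmat_apply_eq_prod_div (hc : c ≠ 0) (huw : ∀ ℓ m, u ℓ ≠ w m) (j ℓ : Fin (n + 1)) :
    Wmat c u w j ℓ = (∏ m, (u ℓ - w (j.succAbove m))) / ∏ i ∈ univ.erase ℓ, (u ℓ - u i) := by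
  have hne : ∀ m, u ℓ - w m ≠ 0 := fun m => sub_ne_zero.2 (huw ℓ m)
  have hg := g_ne_zero hc (huw ℓ j)
  have hprod : ∏ m, (u ℓ - w (j.succAbove m)) ≠ 0 := prod_ne_zero_iff.2 fun m _ => hne _
  rw [Wmat, Matrix.of_apply, Fin.prod_univ_succAbove _ j, prod_g, prod_g,
    card_erase_of_mem (mem_univ ℓ), card_fin, card_fin, Nat.add_sub_cancel]
  field_simp

theorem sum_Wmat_mul_Y (hc : c ≠ 0) (hu : Function.Injective u) (huw : ∀ ℓ m, u ℓ ≠ w m)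
    (b : Fin (n + 1) → ℂ) (j : Fin (n + 1)) :
    ∑ ℓ, Wmat c u w j ℓ * Y b (u ∘ ℓ.succAbove) = Y b (w ∘ j.succAbove) := by
  simp only [Y_eq_sum_esymm, mul_sum]
  rw [sum_comm]
  refine sum_congr rfl fun p _ => ?_
  rw [← Lagrange.sum_div_mul_esymm_erase (s := univ) hu.injOn (univ.val.map (w ∘ j.succAbove))
    (by simp) (by simpa using Nat.lt_succ_iff.1 p.isLt), mul_sum]
  refine sum_congr rfl fun ℓ _ => ?_
  rw [Wmat_apply_eq_prod_div hc huw, Multiset.map_map, prod_map_val,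
    Fin.map_univ_val_comp_succAbove]
  simp only [Function.comp_apply]
  ring

theorem Wmat_mul_Mmat_apply (hc : c ≠ 0) (hu : Function.Injective u) (huw : ∀ ℓ m, u ℓ ≠ w m)
    (v : Fin n → ℂ) (a : Fin (n + 1) → Fin (n + 1) → ℂ) (j k : Fin (n + 1)) :
    (Wmat c u w * Mmat c u v a) j k =
      (∏ i ∈ univ.erase k, g c (u k) (u i)) * Y (a · k) (w ∘ j.succAbove) -
        Wmat c u w j k * ((∏ i, g c (u k) (v i)) * Y (a · k) v) := by
  simp only [Matrix.mul_apply, Mmat, Matrix.of_apply, mul_sub, sum_sub_distrib, ite_mul, one_mul,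
    zero_mul, mul_ite, mul_zero, sum_ite_eq', mem_univ, if_true]
  rw [← sum_Wmat_mul_Y hc hu huw, mul_sum]
  exact congrArg (· - _) (sum_congr rfl fun ℓ _ => by ring)

theorem Wmat_snoc_mul_prod_g (hc : c ≠ 0) {v : Fin n → ℂ} {t : ℂ} {k : Fin (n + 1)}
    (huv : ∀ i, u k ≠ v i) (hut : u k ≠ t) (j : Fin (n + 1)) :
    Wmat c u (Fin.snoc v t) j k * ∏ i, g c (u k) (v i) =
      (∏ i ∈ univ.erase k, g c (u k) (u i)) * g c (u k) ((Fin.snoc v t : Fin (n + 1) → ℂ) j) /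
        g c (u k) t := by
  have hv : ∏ i, g c (u k) (v i) ≠ 0 := prod_ne_zero_iff.2 fun i _ => g_ne_zero hc (huv i)
  have ht := g_ne_zero hc hut
  rw [Wmat, Matrix.of_apply, Fin.prod_univ_castSucc]
  simp only [Fin.snoc_castSucc, Fin.snoc_last]
  field_simp

end Wmat

theorem W_mul_M_with_w_eq_v_general (c : ℂ) (hc : c ≠ 0) (n : ℕ)
    (u : Fin (n + 1) → ℂ) (hu : Function.Injective u)
    (v : Fin n → ℂ)
    (huv : ∀ (j : Fin (n + 1)) (i : Fin n), u j ≠ v i)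
    (a : Fin (n + 1) → Fin (n + 1) → ℂ)
    (wlast : ℂ) (hwu : ∀ k : Fin (n + 1), wlast ≠ u k)
    (w : Fin (n + 1) → ℂ) (hw : w = Fin.snoc v wlast)
    (W : Matrix (Fin (n + 1)) (Fin (n + 1)) ℂ)
    (hW : W = Matrix.of fun j ℓ =>
      g c (u ℓ) (w j) * (∏ i ∈ Finset.univ.erase ℓ, g c (u ℓ) (u i)) /
        (∏ m, g c (u ℓ) (w m))) :
    (∀ k : Fin (n + 1), (W * Mmat c u v a) (Fin.last n) k = 0) ∧
      (∀ (j : Fin n) (k : Fin (n + 1)),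
        (W * Mmat c u v a) j.castSucc k =
          (∏ i ∈ Finset.univ.erase k, g c (u k) (u i)) * Om c u v a j k /
            g c wlast (v j)) := by
  obtain rfl : W = Wmat c u w := hW
  subst hw
  have huw : ∀ ℓ m, u ℓ ≠ (Fin.snoc v wlast : Fin (n + 1) → ℂ) m := fun ℓ =>
    Fin.lastCases (by simpa using (hwu ℓ).symm) fun i => by simpa using huv ℓ i
  refine ⟨fun k => ?_, fun j k => ?_⟩
  · rw [Wmat_mul_Mmat_apply hc hu huw, ← mul_assoc, Wmat_snoc_mul_prod_g hc (huv k) (hwu k).symm,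
      Fin.snoc_last, Fin.succAbove_last, Fin.snoc_comp_castSucc,
      mul_div_cancel_right₀ _ (g_ne_zero hc (hwu k).symm), sub_self]
  · rw [Wmat_mul_Mmat_apply hc hu huw, ← mul_assoc, Wmat_snoc_mul_prod_g hc (huv k) (hwu k).symm,
      Fin.snoc_castSucc, Y_congr _ (Fin.map_univ_val_snoc_comp_succAbove_castSucc v wlast j)]
    set P := ∏ i ∈ univ.erase k, g c (u k) (u i)
    have hvj := sub_ne_zero.2 (huv k j)
    simp only [Om, Matrix.of_apply, g]
    field_simp
    linear_combination P * sub_mul_Y_update (a · k) v j (u k) wlast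

/-- with `(w_1, …, w_n) = (v_1, …, v_n)` and `w_{n+1}` generic, the last row
of `W · M` vanishes and the other rows are proportional to the rows of `Ω`. -/
theorem W_mul_M_with_w_eq_v (c : ℂ) (hc : c ≠ 0) (n : ℕ) (hn : 1 ≤ n)
    (u : Fin (n + 1) → ℂ) (hu : Function.Injective u)
    (v : Fin n → ℂ) (hv : Function.Injective v)
    (huv : ∀ (j : Fin (n + 1)) (i : Fin n), u j ≠ v i)
    (a : Fin (n + 1) → Fin (n + 1) → ℂ)
    (wlast : ℂ) (hwv : ∀ i : Fin n, wlast ≠ v i) (hwu : ∀ k : Fin (n + 1), wlast ≠ u k)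
    (w : Fin (n + 1) → ℂ) (hw : w = Fin.snoc v wlast)
    (W : Matrix (Fin (n + 1)) (Fin (n + 1)) ℂ)
    (hW : W = Matrix.of fun j ℓ =>
      g c (u ℓ) (w j) * (∏ i ∈ Finset.univ.erase ℓ, g c (u ℓ) (u i)) /
        (∏ m, g c (u ℓ) (w m))) :
    (∀ k : Fin (n + 1), (W * Mmat c u v a) (Fin.last n) k = 0) ∧
      (∀ (j : Fin n) (k : Fin (n + 1)),
        (W * Mmat c u v a) j.castSucc k =
          (∏ i ∈ Finset.univ.erase k, g c (u k) (u i)) * Om c u v a j k /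
            g c wlast (v j)) :=
  W_mul_M_with_w_eq_v_general c hc n u hu v huv a wlast hwu w hw W hW
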